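/- arXiv:1403.7610 — 2 statements merged into one kernel-verified Lean document; each statement's English description precedes it below -/
import Mathlib

section
/- The class K_P has the joint embedding property and the amalgamation property. -/
open FirstOrder Language Structure CategoryTheory

/-- The language `L₀` with a `2n`-ary relation symbol `E_n` for each `n ≥ 1`. -/
def L₀ : FirstOrder.Language where
  Functions := fun _ => Empty
  Relations := fun k => {n : ℕ // 0 < n ∧ k = n + n}

/-- The relation symbol `E_n`. -/
def Esymb (n : ℕ) (hn : 0 < n) : L₀.Relations (n + n) := ⟨n, hn, rfl⟩

/-- `E_n(x̄, ȳ)` in an `L₀`-structure. -/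
def ERel (M : Type*) [L₀.Structure M] (n : ℕ) (hn : 0 < n) (x y : Fin n → M) : Prop :=
  Structure.RelMap (Esymb n hn) (Fin.append x y)

/-- The defining conditions for membership in `K₀`: each `E_n` holds only on pairs of
injective `n`-tuples, is invariant under permuting the entries of each tuple separately,
and induces an equivalence relation on `n`-element subsets. -/
def IsK0Struct (C : Type*) [L₀.Structure C] : Prop :=
  ∀ (n : ℕ) (hn : 0 < n),
    (∀ x y : Fin n → C, ERel C n hn x y → Function.Injective x ∧ Function.Injective y) ∧
    (∀ (x y : Fin n → C) (σ τ : Equiv.Perm (Fin n)),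
        ERel C n hn x y → ERel C n hn (x ∘ σ) (y ∘ τ)) ∧
    (∀ x : Fin n → C, Function.Injective x → ERel C n hn x x) ∧
    (∀ x y : Fin n → C, ERel C n hn x y → ERel C n hn y x) ∧
    (∀ x y z : Fin n → C, ERel C n hn x y → ERel C n hn y z → ERel C n hn x z)

/-- The class `K₀` of finite `L₀`-structures as above. -/
def K₀ : Set (Bundled L₀.Structure) := {C | Finite C ∧ IsK0Struct C}

/-- The language `L_P`: a `2n`-ary symbol `E_n` for each `n ≥ 1` and a `2n`-ary symbol
`<_n` for each `n ∈ P`. -/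
def LP (P : Set ℕ) : FirstOrder.Language where
  Functions := fun _ => Empty
  Relations := fun k => {n : ℕ // 0 < n ∧ k = n + n} ⊕ {n : ℕ // n ∈ P ∧ k = n + n}

/-- The symbol `E_n` of `L_P`. -/
def EsymbP (P : Set ℕ) (n : ℕ) (hn : 0 < n) : (LP P).Relations (n + n) :=
  Sum.inl ⟨n, hn, rfl⟩

/-- The symbol `<_n` of `L_P`. -/
def LTsymbP (P : Set ℕ) (n : ℕ) (hn : n ∈ P) : (LP P).Relations (n + n) :=
  Sum.inr ⟨n, hn, rfl⟩

/-- `E_n(x̄, ȳ)` in an `L_P`-structure. -/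
def ERelP (P : Set ℕ) (M : Type*) [i : (LP P).Structure M] (n : ℕ) (hn : 0 < n)
    (x y : Fin n → M) : Prop :=
  @Structure.RelMap (LP P) M i (n + n) (EsymbP P n hn) (Fin.append x y)

/-- `x̄ <_n ȳ` in an `L_P`-structure. -/
def LTRelP (P : Set ℕ) (M : Type*) [i : (LP P).Structure M] (n : ℕ) (hn : n ∈ P)
    (x y : Fin n → M) : Prop :=
  @Structure.RelMap (LP P) M i (n + n) (LTsymbP P n hn) (Fin.append x y)

/-- The defining conditions for membership in `K_P`: the `{E_n}`-part satisfies the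
`K₀`-conditions, and for `n ∈ P` the relation `<_n` holds only on injective tuples, is
`E_n`-invariant, and induces a strict linear order on `E_n`-classes. -/
def IsKPStruct (P : Set ℕ) (C : Type*) [(LP P).Structure C] : Prop :=
  (∀ (n : ℕ) (hn : 0 < n),
    (∀ x y : Fin n → C, ERelP P C n hn x y → Function.Injective x ∧ Function.Injective y) ∧
    (∀ (x y : Fin n → C) (σ τ : Equiv.Perm (Fin n)),
        ERelP P C n hn x y → ERelP P C n hn (x ∘ σ) (y ∘ τ)) ∧
    (∀ x : Fin n → C, Function.Injective x → ERelP P C n hn x x) ∧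
    (∀ x y : Fin n → C, ERelP P C n hn x y → ERelP P C n hn y x) ∧
    (∀ x y z : Fin n → C, ERelP P C n hn x y → ERelP P C n hn y z → ERelP P C n hn x z)) ∧
  (∀ (n : ℕ) (hn : n ∈ P) (hn0 : 0 < n),
    (∀ x y : Fin n → C, LTRelP P C n hn x y → Function.Injective x ∧ Function.Injective y) ∧
    (∀ x x' y y' : Fin n → C, ERelP P C n hn0 x x' → ERelP P C n hn0 y y' →
        LTRelP P C n hn x y → LTRelP P C n hn x' y') ∧
    (∀ x y : Fin n → C, LTRelP P C n hn x y → ¬ ERelP P C n hn0 x y) ∧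
    (∀ x y z : Fin n → C, LTRelP P C n hn x y → LTRelP P C n hn y z → LTRelP P C n hn x z) ∧
    (∀ x y : Fin n → C, Function.Injective x → Function.Injective y →
        ¬ ERelP P C n hn0 x y → LTRelP P C n hn x y ∨ LTRelP P C n hn y x))

/-- The class `K_P` of finite `L_P`-structures as above. -/
def KP (P : Set ℕ) : Set (Bundled (LP P).Structure) := {C | Finite C ∧ IsKPStruct P C}

/-!
A `K_P`-structure is the same thing as a family of preorders on `n`-tuples, invariant under
permutations and total on injective tuples when `n ∈ P`: `E_n` is the induced equivalence and
`<_n` the strict part (`IsInducedBy`). To amalgamate `B` and `C` over `A`, take the pushout of the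
underlying sets and on its `n`-tuples the preorder generated by those of `B` and `C` and by
permutations. A chain of generating steps can pass between tuples of `B` and tuples of `C` only
through tuples of `A`, where the two preorders agree, so the generated preorder restricts to the
given ones; Szpilrajn's theorem then makes it total without merging any two classes. Joint
embedding is amalgamation over the empty structure.
-/

open Function Relation

namespace Relation

/-- A chain of steps starting in `range i` can only enter `range j` at a point of the overlap and
leave it at another such point, and in between it is a single `s`-step, which `hsr` turns into
an `r`-step. -/
theorem ReflTransGen.of_map_sup_map {X Y Z : Type*} {r : X → X → Prop} {s : Y → Y → Prop}
    {t : Z → Z → Prop} {i : X → Z} {j : Y → Z} [IsPreorder X r] [IsTrans Y s]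
    (hi : Injective i) (hj : Injective j)
    (hsr : ∀ x x' y y', i x = j y → i x' = j y' → s y y' → r x x')
    (hti : ∀ x w, t (i x) w → ∃ x', w = i x' ∧ r x x')
    (htj : ∀ y w, t (j y) w → ∃ y', w = j y' ∧ s y y')
    {x x' : X} (h : ReflTransGen (Relation.Map r i i ⊔ Relation.Map s j j ⊔ t) (i x) (i x')) :
    r x x' := by
  suffices key : ∀ w, ReflTransGen (Relation.Map r i i ⊔ Relation.Map s j j ⊔ t) (i x) w →
      (∃ x', w = i x' ∧ r x x') ∨ ∃ x₀ y₀ y', i x₀ = j y₀ ∧ r x x₀ ∧ s y₀ y' ∧ w = j y' by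
    rcases key _ h with ⟨x'', hx'', hr⟩ | ⟨x₀, y₀, y', h₀, hr, hs, h'⟩
    · rwa [hi hx'']
    · exact _root_.trans hr (hsr _ _ _ _ h₀ h' hs)
  intro w hw
  induction hw with
  | refl => exact Or.inl ⟨x, rfl, refl_of r x⟩
  | tail _ hstep ih =>
    rcases ih with ⟨x₁, rfl, hr⟩ | ⟨x₀, y₀, y₁, h₀, hr, hs, rfl⟩
    · rcases hstep with (⟨a, b, hab, ha, rfl⟩ | ⟨a, b, hab, ha, rfl⟩) | ht
      · exact Or.inl ⟨b, rfl, _root_.trans hr (hi ha ▸ hab)⟩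
      · exact Or.inr ⟨x₁, a, b, ha.symm, hr, hab, rfl⟩
      · obtain ⟨x₂, rfl, hr'⟩ := hti _ _ ht
        exact Or.inl ⟨x₂, rfl, _root_.trans hr hr'⟩
    · rcases hstep with (⟨a, b, hab, ha, rfl⟩ | ⟨a, b, hab, ha, rfl⟩) | ht
      · exact Or.inl ⟨b, rfl, _root_.trans hr (_root_.trans (hsr _ _ _ _ h₀ ha hs) hab)⟩
      · exact Or.inr ⟨x₀, y₀, b, h₀, hr, _root_.trans hs (hj ha ▸ hab), rfl⟩
      · obtain ⟨y₂, rfl, hs'⟩ := htj _ _ ht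
        exact Or.inr ⟨x₀, y₀, y₂, h₀, hr, _root_.trans hs hs', rfl⟩

/-- Szpilrajn's theorem for preorders. -/
theorem exists_total_extension {α : Type*} (R : α → α → Prop) [IsPreorder α R] :
    ∃ T : α → α → Prop, IsPreorder α T ∧ Std.Total T ∧ R ≤ T ∧ ∀ a b, T a b → T b a → R a b := by
  let : Preorder α := { le := R, le_refl := refl_of R, le_trans := fun _ _ _ => trans_of R }
  obtain ⟨s, hs, hle⟩ := extend_partialOrder ((· ≤ ·) : Antisymmetrization α (· ≤ ·) → _ → Prop)
  let q := toAntisymmetrization (α := α) (· ≤ ·)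
  refine ⟨fun a b => s (q a) (q b),
    { refl := fun a => refl_of s _, trans := fun _ _ _ => trans_of s },
    ⟨fun a b => total_of s _ _⟩, fun a b h => hle _ _ h, fun a b hab hba => ?_⟩
  exact (antisymm_of s hab hba).le

end Relation

theorem Fin.comp_append {α β : Type*} {m n : ℕ} (h : α → β) (x : Fin m → α) (y : Fin n → α) :
    h ∘ Fin.append x y = Fin.append (h ∘ x) (h ∘ y) := by
  funext i
  refine Fin.addCases (fun j => ?_) (fun j => ?_) i <;> simp

section Embeddings

variable {P : Set ℕ} {M N : Type*} [(LP P).Structure M] [(LP P).Structure N]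

theorem FirstOrder.Language.Embedding.eRelP_comp_iff (φ : M ↪[LP P] N) {n : ℕ} (hn : 0 < n)
    (x y : Fin n → M) : ERelP P N n hn (φ ∘ x) (φ ∘ y) ↔ ERelP P M n hn x y := by
  rw [ERelP, ← Fin.comp_append, φ.map_rel, ERelP]

theorem FirstOrder.Language.Embedding.ltRelP_comp_iff (φ : M ↪[LP P] N) {n : ℕ} (hn : n ∈ P)
    (x y : Fin n → M) : LTRelP P N n hn (φ ∘ x) (φ ∘ y) ↔ LTRelP P M n hn x y := by
  rw [LTRelP, ← Fin.comp_append, φ.map_rel, LTRelP]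

def LP.embeddingOfIff (φ : M → N) (hφ : Injective φ)
    (hE : ∀ n (hn : 0 < n) (x y : Fin n → M), ERelP P N n hn (φ ∘ x) (φ ∘ y) ↔ ERelP P M n hn x y)
    (hLT : ∀ n (hn : n ∈ P) (x y : Fin n → M),
      LTRelP P N n hn (φ ∘ x) (φ ∘ y) ↔ LTRelP P M n hn x y) :
    M ↪[LP P] N where
  toFun := φ
  inj' := hφ
  map_fun' F := F.elim
  map_rel' := by
    rintro k (⟨n, hn, rfl⟩ | ⟨n, hn, rfl⟩) t <;>
      rw [← Fin.append_castAdd_natAdd (f := t), Fin.comp_append]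
    exacts [hE n hn _ _, hLT n hn _ _]

end Embeddings

section TuplePreorders

variable {P : Set ℕ} {M : Type*}

structure IsTuplePreorder (P : Set ℕ) (T : ∀ n, (Fin n → M) → (Fin n → M) → Prop) : Prop where
  isPreorder n : IsPreorder (Fin n → M) (T n)
  total {n} (hn : n ∈ P) {x y : Fin n → M} : Injective x → Injective y → T n x y ∨ T n y x
  perm {n} {x : Fin n → M} (σ : Equiv.Perm (Fin n)) : Injective x → T n x (x ∘ σ)

def IsInducedBy (P : Set ℕ) (M : Type*) [(LP P).Structure M]
    (T : ∀ n, (Fin n → M) → (Fin n → M) → Prop) : Prop :=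
  (∀ n (hn : 0 < n) (x y : Fin n → M),
    ERelP P M n hn x y ↔ Injective x ∧ Injective y ∧ T n x y ∧ T n y x) ∧
  (∀ n (hn : n ∈ P) (x y : Fin n → M),
    LTRelP P M n hn x y ↔ Injective x ∧ Injective y ∧ ¬ T n y x)

@[reducible] def inducedStructure (P : Set ℕ) (T : ∀ n, (Fin n → M) → (Fin n → M) → Prop) :
    (LP P).Structure M where
  funMap F := F.elim
  RelMap r t := r.elim
    (fun e => let x := fun i => t (Fin.cast e.2.2.symm (Fin.castAdd e.1 i))
      let y := fun i => t (Fin.cast e.2.2.symm (Fin.natAdd e.1 i))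
      Injective x ∧ Injective y ∧ T e.1 x y ∧ T e.1 y x)
    (fun e => let x := fun i => t (Fin.cast e.2.2.symm (Fin.castAdd e.1 i))
      let y := fun i => t (Fin.cast e.2.2.symm (Fin.natAdd e.1 i))
      Injective x ∧ Injective y ∧ ¬ T e.1 y x)

theorem isInducedBy_inducedStructure (T : ∀ n, (Fin n → M) → (Fin n → M) → Prop) :
    @IsInducedBy P M (inducedStructure P T) T :=
  ⟨fun n hn x y => by
    simp only [ERelP, EsymbP, Structure.RelMap, Sum.elim_inl, Fin.cast_eq_self, Fin.append_left,
      Fin.append_right],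
    fun n hn x y => by
    simp only [LTRelP, LTsymbP, Structure.RelMap, Sum.elim_inr, Fin.cast_eq_self, Fin.append_left,
      Fin.append_right]⟩

variable {D : Type*} {T : ∀ n, (Fin n → M) → (Fin n → M) → Prop}

theorem IsTuplePreorder.perm_le (hT : IsTuplePreorder P T) {n : ℕ} {x : Fin n → M}
    (σ : Equiv.Perm (Fin n)) (hx : Injective x) : T n (x ∘ σ) x := by
  simpa [Function.comp_assoc] using hT.perm σ⁻¹ (hx.comp σ.injective)

theorem IsTuplePreorder.exists_perm_step (hT : IsTuplePreorder P T) {Z : Type*} {φ : M → Z}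
    {n : ℕ} {x : Fin n → M} {w : Fin n → Z}
    (h : Injective (φ ∘ x) ∧ ∃ σ : Equiv.Perm (Fin n), w = φ ∘ x ∘ σ) :
    ∃ x', w = φ ∘ x' ∧ T n x x' := by
  obtain ⟨hx, σ, rfl⟩ := h
  exact ⟨x ∘ σ, rfl, hT.perm σ (Injective.of_comp hx)⟩

theorem IsTuplePreorder.isKPStruct [(LP P).Structure M] (hT : IsTuplePreorder P T)
    (hM : IsInducedBy P M T) : IsKPStruct P M := by
  have hrefl n := (hT.isPreorder n).refl
  have htrans n := (hT.isPreorder n).trans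
  refine ⟨fun n hn => ⟨?_, ?_, ?_, ?_, ?_⟩, fun n hn _ => ⟨?_, ?_, ?_, ?_, ?_⟩⟩ <;>
    simp only [hM.1, hM.2]
  · exact fun x y h => ⟨h.1, h.2.1⟩
  · rintro x y σ τ ⟨hx, hy, hxy, hyx⟩
    exact ⟨hx.comp σ.injective, hy.comp τ.injective,
      htrans n _ _ _ (hT.perm_le σ hx) (htrans n _ _ _ hxy (hT.perm τ hy)),
      htrans n _ _ _ (hT.perm_le τ hy) (htrans n _ _ _ hyx (hT.perm σ hx))⟩
  · exact fun x hx => ⟨hx, hx, hrefl n x, hrefl n x⟩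
  · exact fun x y ⟨hx, hy, hxy, hyx⟩ => ⟨hy, hx, hyx, hxy⟩
  · exact fun x y z ⟨hx, _, hxy, hyx⟩ ⟨_, hz, hyz, hzy⟩ =>
      ⟨hx, hz, htrans n _ _ _ hxy hyz, htrans n _ _ _ hzy hyx⟩
  · exact fun x y h => ⟨h.1, h.2.1⟩
  · rintro x x' y y' ⟨-, hx', -, hx'x⟩ ⟨hy, hy', hyy', -⟩ ⟨-, -, hyx⟩
    exact ⟨hx', hy', fun h => hyx (htrans n _ _ _ hyy' (htrans n _ _ _ h hx'x))⟩
  · exact fun x y h hE => h.2.2 hE.2.2.2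
  · rintro x y z ⟨hx, hy, hyx⟩ ⟨-, hz, hzy⟩
    refine ⟨hx, hz, fun hzx => hzy (htrans n _ _ _ hzx ?_)⟩
    exact (hT.total hn hx hy).resolve_right hyx
  · intro x y hx hy hE
    by_contra! h
    exact hE ⟨hx, hy, h.2 hy hx, h.1 hx hy⟩

def IsInducedBy.embedding [(LP P).Structure M] [(LP P).Structure D]
    {T' : ∀ n, (Fin n → D) → (Fin n → D) → Prop} (hM : IsInducedBy P M T)
    (hT : ∀ {n}, n ∈ P → ∀ {x y : Fin n → M}, Injective x → Injective y → T n x y ∨ T n y x)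
    (hD : IsInducedBy P D T') (φ : M → D) (hφ : Injective φ)
    (hle : ∀ n x y, T n x y → T' n (φ ∘ x) (φ ∘ y))
    (hequiv : ∀ n x y, T' n (φ ∘ x) (φ ∘ y) → T' n (φ ∘ y) (φ ∘ x) → T n x y) :
    M ↪[LP P] D :=
  LP.embeddingOfIff φ hφ
    (fun n hn x y => by
      rw [hD.1, hM.1, hφ.of_comp_iff, hφ.of_comp_iff]
      exact and_congr_right fun _ => and_congr_right fun _ =>
        ⟨fun h => ⟨hequiv n x y h.1 h.2, hequiv n y x h.2 h.1⟩,
          fun h => ⟨hle n x y h.1, hle n y x h.2⟩⟩)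
    (fun n hn x y => by
      rw [hD.2, hM.2, hφ.of_comp_iff, hφ.of_comp_iff]
      refine and_congr_right fun hx => and_congr_right fun hy =>
        ⟨fun h h' => h (hle n y x h'), fun h h' => h (hequiv n y x h' ?_)⟩
      exact hle n x y ((hT hn hx hy).resolve_right h))

end TuplePreorders

section KPStructures

variable {P : Set ℕ} {M N : Type*} [(LP P).Structure M] [(LP P).Structure N]

/-- Equality is included to make the relation reflexive on non-injective tuples as well. -/
def tupleLE (P : Set ℕ) (M : Type*) [(LP P).Structure M] (n : ℕ) (x y : Fin n → M) : Prop :=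
  x = y ∨ (∃ hn : 0 < n, ERelP P M n hn x y) ∨ ∃ hn : n ∈ P, LTRelP P M n hn x y

theorem FirstOrder.Language.Embedding.tupleLE_comp_iff (φ : M ↪[LP P] N) {n : ℕ}
    (x y : Fin n → M) : tupleLE P N n (φ ∘ x) (φ ∘ y) ↔ tupleLE P M n x y := by
  simp only [tupleLE, φ.injective.comp_left.eq_iff, φ.eRelP_comp_iff, φ.ltRelP_comp_iff]

namespace IsKPStruct

variable (hM : IsKPStruct P M) {n : ℕ} {x y z : Fin n → M}
include hM

theorem eRelP_refl (hn : 0 < n) (hx : Injective x) : ERelP P M n hn x x :=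
  (hM.1 n hn).2.2.1 x hx

theorem eRelP_symm {hn : 0 < n} (h : ERelP P M n hn x y) : ERelP P M n hn y x :=
  (hM.1 n hn).2.2.2.1 x y h

theorem eRelP_trans {hn : 0 < n} (h : ERelP P M n hn x y) (h' : ERelP P M n hn y z) :
    ERelP P M n hn x z :=
  (hM.1 n hn).2.2.2.2 x y z h h'

theorem ltRelP_trans_eRelP {hn : n ∈ P} (hn0 : 0 < n) (h : LTRelP P M n hn x y)
    (h' : ERelP P M n hn0 y z) : LTRelP P M n hn x z :=
  (hM.2 n hn hn0).2.1 x x y z (hM.eRelP_refl hn0 ((hM.2 n hn hn0).1 x y h).1) h' h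

theorem eRelP_trans_ltRelP {hn : n ∈ P} (hn0 : 0 < n) (h : ERelP P M n hn0 x y)
    (h' : LTRelP P M n hn y z) : LTRelP P M n hn x z :=
  (hM.2 n hn hn0).2.1 y x z z (hM.eRelP_symm h)
    (hM.eRelP_refl hn0 ((hM.2 n hn hn0).1 y z h').2) h'

theorem ltRelP_iff (hP : ∀ n ∈ P, 0 < n) (hn : n ∈ P) :
    LTRelP P M n hn x y ↔ Injective x ∧ Injective y ∧ ¬ tupleLE P M n y x := by
  obtain ⟨hinj, -, hnotE, htrans, htotal⟩ := hM.2 n hn (hP n hn)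
  have hirrefl : ¬ LTRelP P M n hn x x := fun h =>
    hnotE x x h (hM.eRelP_refl (hP n hn) (hinj x x h).1)
  constructor
  · intro h
    refine ⟨(hinj x y h).1, (hinj x y h).2, ?_⟩
    rintro (rfl | ⟨_, hE⟩ | ⟨_, h'⟩)
    · exact hirrefl h
    · exact hnotE x y h (hM.eRelP_symm hE)
    · exact hirrefl (htrans x y x h h')
  · rintro ⟨hx, hy, hyx⟩
    refine (htotal x y hx hy fun hE => hyx ?_).resolve_right fun h => hyx ?_
    exacts [Or.inr (Or.inl ⟨_, hM.eRelP_symm hE⟩), Or.inr (Or.inr ⟨hn, h⟩)]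

theorem isInducedBy (hP : ∀ n ∈ P, 0 < n) : IsInducedBy P M (tupleLE P M) := by
  refine ⟨fun n hn x y => ⟨fun h => ?_, ?_⟩, fun n hn x y => hM.ltRelP_iff hP hn⟩
  · exact ⟨((hM.1 n hn).1 x y h).1, ((hM.1 n hn).1 x y h).2, Or.inr (Or.inl ⟨hn, h⟩),
      Or.inr (Or.inl ⟨hn, hM.eRelP_symm h⟩)⟩
  · rintro ⟨hx, -, rfl | ⟨_, h⟩ | ⟨hn', h⟩, hyx⟩
    · exact hM.eRelP_refl hn hx
    · exact h
    · exact ((hM.ltRelP_iff hP hn').1 h).2.2 hyx |>.elim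

theorem isTuplePreorder (hP : ∀ n ∈ P, 0 < n) : IsTuplePreorder P (tupleLE P M) where
  isPreorder n :=
    { refl := fun x => Or.inl rfl
      trans := by
        rintro x y z (rfl | ⟨hn, hxy⟩ | ⟨hn, hxy⟩) hyz
        · exact hyz
        · rcases hyz with rfl | ⟨_, hyz⟩ | ⟨_, hyz⟩
          exacts [Or.inr (Or.inl ⟨hn, hxy⟩), Or.inr (Or.inl ⟨hn, hM.eRelP_trans hxy hyz⟩),
            Or.inr (Or.inr ⟨_, hM.eRelP_trans_ltRelP hn hxy hyz⟩)]
        · rcases hyz with rfl | ⟨_, hyz⟩ | ⟨_, hyz⟩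
          exacts [Or.inr (Or.inr ⟨hn, hxy⟩), Or.inr (Or.inr ⟨hn, hM.ltRelP_trans_eRelP _ hxy hyz⟩),
            Or.inr (Or.inr ⟨hn, (hM.2 n hn (hP n hn)).2.2.2.1 x y z hxy hyz⟩)] }
  total {n} hn x y hx hy := by
    by_cases hE : ERelP P M n (hP n hn) x y
    · exact Or.inl (Or.inr (Or.inl ⟨_, hE⟩))
    · exact ((hM.2 n hn (hP n hn)).2.2.2.2 x y hx hy hE).imp
        (fun h => Or.inr (Or.inr ⟨hn, h⟩)) fun h => Or.inr (Or.inr ⟨hn, h⟩)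
  perm {n} x σ hx := by
    rcases Nat.eq_zero_or_pos n with rfl | hn
    · exact Or.inl (Subsingleton.elim _ _)
    · refine Or.inr (Or.inl ⟨hn, ?_⟩)
      simpa using (hM.1 n hn).2.1 x x 1 σ (hM.eRelP_refl hn hx)

end IsKPStruct

end KPStructures

section Amalgam

open Limits

variable {P : Set ℕ} {A B C : Type u} [(LP P).Structure A] [(LP P).Structure B]
  [(LP P).Structure C] (f : A ↪[LP P] B) (g : A ↪[LP P] C)

abbrev Amalgam : Type u := Types.Pushout (TypeCat.ofHom ⇑f) (TypeCat.ofHom ⇑g)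

def Amalgam.inl : B → Amalgam f g := Types.Pushout.inl _ _

def Amalgam.inr : C → Amalgam f g := Types.Pushout.inr _ _

theorem Amalgam.inl_injective : Injective (Amalgam.inl f g) := by
  have : Mono (TypeCat.ofHom ⇑g) := (mono_iff_injective _).2 g.injective
  exact (mono_iff_injective _).1 inferInstance

theorem Amalgam.inr_injective : Injective (Amalgam.inr f g) := by
  have : Mono (TypeCat.ofHom ⇑f) := (mono_iff_injective _).2 f.injective
  exact (mono_iff_injective _).1 inferInstance

theorem Amalgam.inl_apply (a : A) : Amalgam.inl f g (f a) = Amalgam.inr f g (g a) :=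
  Quot.sound (.inl_inr a)

theorem Amalgam.exists_of_inl_comp_eq_inr_comp {n : ℕ} {x : Fin n → B} {y : Fin n → C}
    (h : Amalgam.inl f g ∘ x = Amalgam.inr f g ∘ y) : ∃ a : Fin n → A, x = f ∘ a ∧ y = g ∘ a := by
  have : Mono (TypeCat.ofHom ⇑f) := (mono_iff_injective _).2 f.injective
  choose a hfa hga using fun i => (Types.Pushout.inl_eq_inr_iff _ _ (x i) (y i)).1 (congrFun h i)
  exact ⟨a, funext fun i => (hfa i).symm, funext fun i => (hga i).symm⟩

def Amalgam.tupleStep (n : ℕ) : (Fin n → Amalgam f g) → (Fin n → Amalgam f g) → Prop :=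
  Relation.Map (tupleLE P B n) (Amalgam.inl f g ∘ ·) (Amalgam.inl f g ∘ ·) ⊔
    Relation.Map (tupleLE P C n) (Amalgam.inr f g ∘ ·) (Amalgam.inr f g ∘ ·) ⊔
    fun z w => Injective z ∧ ∃ σ : Equiv.Perm (Fin n), w = z ∘ σ

variable {f g}

theorem Amalgam.tupleLE_of_reflTransGen_inl (hP : ∀ n ∈ P, 0 < n) (hB : IsKPStruct P B)
    (hC : IsKPStruct P C) {n : ℕ} {x y : Fin n → B}
    (h : ReflTransGen (Amalgam.tupleStep f g n) (Amalgam.inl f g ∘ x) (Amalgam.inl f g ∘ y)) :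
    tupleLE P B n x y := by
  have := (hB.isTuplePreorder hP).isPreorder n
  have := (hC.isTuplePreorder hP).isPreorder n
  refine ReflTransGen.of_map_sup_map (Amalgam.inl_injective f g).comp_left
    (Amalgam.inr_injective f g).comp_left ?_ (fun _ _ => (hB.isTuplePreorder hP).exists_perm_step)
    (fun _ _ => (hC.isTuplePreorder hP).exists_perm_step) h
  intro x x' y y' hxy hxy' hyy'
  obtain ⟨a, rfl, rfl⟩ := Amalgam.exists_of_inl_comp_eq_inr_comp f g hxy
  obtain ⟨a', rfl, rfl⟩ := Amalgam.exists_of_inl_comp_eq_inr_comp f g hxy'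
  rwa [f.tupleLE_comp_iff, ← g.tupleLE_comp_iff]

theorem Amalgam.tupleLE_of_reflTransGen_inr (hP : ∀ n ∈ P, 0 < n) (hB : IsKPStruct P B)
    (hC : IsKPStruct P C) {n : ℕ} {x y : Fin n → C}
    (h : ReflTransGen (Amalgam.tupleStep f g n) (Amalgam.inr f g ∘ x) (Amalgam.inr f g ∘ y)) :
    tupleLE P C n x y := by
  have := (hB.isTuplePreorder hP).isPreorder n
  have := (hC.isTuplePreorder hP).isPreorder n
  rw [Amalgam.tupleStep, sup_comm (Relation.Map _ _ _)] at h
  refine ReflTransGen.of_map_sup_map (Amalgam.inr_injective f g).comp_left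
    (Amalgam.inl_injective f g).comp_left ?_ (fun _ _ => (hC.isTuplePreorder hP).exists_perm_step)
    (fun _ _ => (hB.isTuplePreorder hP).exists_perm_step) h
  intro y y' x x' hxy hxy' hxx'
  obtain ⟨a, rfl, rfl⟩ := Amalgam.exists_of_inl_comp_eq_inr_comp f g hxy.symm
  obtain ⟨a', rfl, rfl⟩ := Amalgam.exists_of_inl_comp_eq_inr_comp f g hxy'.symm
  rwa [g.tupleLE_comp_iff, ← f.tupleLE_comp_iff]

theorem exists_amalgam_mem_KP (hP : ∀ n ∈ P, 0 < n) (M N O : Bundled.{u} (LP P).Structure)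
    (MN : M ↪[LP P] N) (MO : M ↪[LP P] O) (hN : N ∈ KP P) (hO : O ∈ KP P) :
    ∃ (Q : Bundled.{u} (LP P).Structure) (NQ : N ↪[LP P] Q) (OQ : O ↪[LP P] Q),
      Q ∈ KP P ∧ NQ.comp MN = OQ.comp MO := by
  obtain ⟨_, hN⟩ := hN
  obtain ⟨_, hO⟩ := hO
  choose T hTpre hTtot hRT hTR using
    fun n => exists_total_extension (ReflTransGen (Amalgam.tupleStep MN MO n))
  have hT : IsTuplePreorder P T :=
    { isPreorder := hTpre
      total := fun _ x y _ _ => (hTtot _).total x y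
      perm := fun σ hx => hRT _ _ _ (.single (Or.inr ⟨hx, σ, rfl⟩)) }
  let := inducedStructure P T
  have hQ := isInducedBy_inducedStructure (P := P) T
  refine ⟨⟨Amalgam MN MO, _⟩,
    (hN.isInducedBy hP).embedding (hN.isTuplePreorder hP).total hQ _ (Amalgam.inl_injective MN MO)
      (fun n x y h => hRT n _ _ (.single (Or.inl (Or.inl ⟨x, y, h, rfl, rfl⟩))))
      (fun n x y h h' => Amalgam.tupleLE_of_reflTransGen_inl hP hN hO (hTR n _ _ h h')),
    (hO.isInducedBy hP).embedding (hO.isTuplePreorder hP).total hQ _ (Amalgam.inr_injective MN MO)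
      (fun n x y h => hRT n _ _ (.single (Or.inl (Or.inr ⟨x, y, h, rfl, rfl⟩))))
      (fun n x y h h' => Amalgam.tupleLE_of_reflTransGen_inr hP hN hO (hTR n _ _ h h')),
    ⟨Quot.finite _, hT.isKPStruct hQ⟩, ?_⟩
  ext a
  exact Amalgam.inl_apply MN MO a

end Amalgam

def LP.embeddingOfIsEmpty {P : Set ℕ} {M N : Type*} [(LP P).Structure M] [(LP P).Structure N]
    [IsEmpty M] (hP : ∀ n ∈ P, 0 < n) : M ↪[LP P] N :=
  LP.embeddingOfIff isEmptyElim (fun a => isEmptyElim a) (fun _ hn x => isEmptyElim (x ⟨0, hn⟩))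
    fun n hn x => isEmptyElim (x ⟨0, hP n hn⟩)

/-- `K_P` has the joint embedding property and the amalgamation property. -/
theorem KP_JEP_and_AP (P : Set ℕ) (hP : ∀ n ∈ P, 3 ≤ n) :
    JointEmbedding (KP P) ∧ Amalgamation (KP P) := by
  have hP₀ : ∀ n ∈ P, 0 < n := fun n hn => zero_lt_three.trans_le (hP n hn)
  refine ⟨fun N hN O hO => ?_,
    fun M N O MN MO _ hN hO => exists_amalgam_mem_KP hP₀ M N O MN MO hN hO⟩
  let : (LP P).Structure PEmpty := { funMap := fun F => F.elim, RelMap := fun _ _ => False }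
  obtain ⟨Q, NQ, OQ, hQ, -⟩ := exists_amalgam_mem_KP hP₀ ⟨PEmpty, _⟩ N O
    (LP.embeddingOfIsEmpty hP₀) (LP.embeddingOfIsEmpty hP₀) hN hO
  exact ⟨Q, hQ, ⟨NQ⟩, ⟨OQ⟩⟩
end

section
/- Let n ∈ P with 2n ∉ P. Then M contains a <_n-increasing sequence ā₁, ā₂, ā₃, ā₄, ā₅, ā₆ of type ℤ/4ℤ: pairwise disjoint n-tuples of pairwise distinct elements with ā₁ <_n ā₂ <_n ā₃ <_n ā₄ <_n ā₅ <_n ā₆ such that the 2n-tuples ā₁ā₂, ā₂ā₃ and ā₃ā₄ have the same isomorphism type in M, the 4n-tuples ā₁ā₂ā₃ā₄ and ā₃ā₄ā₅ā₆ have the same isomorphism type in M, and ā₁ā₂ and ā₅ā₆ are E_{2n}-equivalent but not E_{2n}-equivalent to ā₃ā₄. -/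
open FirstOrder Language Structure CategoryTheory

/-- Two `m`-tuples have the same isomorphism type in `M` when the coordinate-wise map
between them is an isomorphism of the induced substructures. -/
def SameType (P : Set ℕ) (M : Type*) [inst : (LP P).Structure M] {m : ℕ}
    (x y : Fin m → M) : Prop :=
  (∀ i j : Fin m, x i = x j ↔ y i = y j) ∧
  ∀ (k : ℕ) (R : (LP P).Relations k) (v : Fin k → Fin m),
    @Structure.RelMap (LP P) M inst k R (x ∘ v) ↔ @Structure.RelMap (LP P) M inst k R (y ∘ v)

/-!
Realise the six tuples as the blocks `{i} × Fin n` of `Fin 6 ×ₗ Fin n`, with the structure in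
which `E_k` relates injective `k`-tuples with the same underlying set and `<_k` compares
underlying sets colexicographically, except that the underlying sets of blocks `0, 1` and of
blocks `4, 5` are glued into one `E_{2n}`-class. Since `2n ∉ P`, no order `<_k` has to respect
the gluing, so this finite structure lies in `K_P = age M` and embeds into `M`.

Shifting by one or two blocks preserves the lexicographic order, hence the colex order of sets,
and on tuples inside blocks `0, …, 3` it cannot produce or destroy a glued pair: such sets miss
block `5`, and their shifts miss block `0`. This gives the three equalities of types, while the
gluing itself makes `ā₁ā₂` and `ā₅ā₆`, but not `ā₃ā₄`, `E_{2n}`-equivalent.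
-/

open Finset

theorem Fin.comp_append_s18 {α β : Type*} {p q : ℕ} (g : α → β) (u : Fin p → α) (v : Fin q → α) :
    g ∘ Fin.append u v = Fin.append (g ∘ u) (g ∘ v) := by
  funext i
  induction i using Fin.addCases <;> simp

theorem Fin.append_comp_castAdd {α : Type*} {p q : ℕ} (u : Fin p → α) (v : Fin q → α) :
    Fin.append u v ∘ Fin.castAdd q = u :=
  funext (Fin.append_left u v)

theorem Fin.append_comp_natAdd {α : Type*} {p q : ℕ} (u : Fin p → α) (v : Fin q → α) :
    Fin.append u v ∘ Fin.natAdd p = v :=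
  funext (Fin.append_right u v)

namespace Finset

variable {α : Type*} [DecidableEq α] {k : ℕ}

theorem image_univ_comp_perm (x : Fin k → α) (σ : Equiv.Perm (Fin k)) :
    univ.image (x ∘ σ) = univ.image x := by
  rw [← image_image, image_univ_equiv]

theorem card_image_univ_of_injective {x : Fin k → α} (hx : Function.Injective x) :
    #(univ.image x) = k := by
  rw [card_image_of_injective _ hx, card_fin]

theorem coe_image_univ_subset {S : Set α} {x : Fin k → α} (hx : ∀ i, x i ∈ S) :
    ↑(univ.image x) ⊆ S := by
  simpa [Set.range_subset_iff] using hx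

end Finset

namespace Finset.Colex

variable {α β : Type*} [LinearOrder α] [LinearOrder β] {f : α → β} {S : Set α} {s t : Finset α}

theorem toColex_image_le_toColex_image_of_strictMonoOn (hf : StrictMonoOn f S)
    (hs : ↑s ⊆ S) (ht : ↑t ⊆ S) :
    toColex (s.image f) ≤ toColex (t.image f) ↔ toColex s ≤ toColex t := by
  have hmem : ∀ {u : Finset α}, ↑u ⊆ S → ∀ {a}, a ∈ S → (f a ∈ u.image f ↔ a ∈ u) :=
    fun hu _ ha => by simpa using hf.injOn.mem_image_iff hu ha
  simp only [toColex_le_toColex, forall_mem_image, exists_mem_image]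
  refine forall₂_congr fun a ha => ?_
  rw [hmem ht (hs ha)]
  refine imp_congr_right fun _ => exists_congr fun b => and_congr_right fun hb => ?_
  rw [hmem hs (ht hb), hf.le_iff_le (hs ha) (ht hb)]

theorem toColex_image_lt_toColex_image_of_strictMonoOn (hf : StrictMonoOn f S)
    (hs : ↑s ⊆ S) (ht : ↑t ⊆ S) :
    toColex (s.image f) < toColex (t.image f) ↔ toColex s < toColex t :=
  lt_iff_lt_of_le_iff_le <| toColex_image_le_toColex_image_of_strictMonoOn hf ht hs

theorem toColex_lt_toColex_of_forall_lt (ht : t.Nonempty) (h : ∀ a ∈ s, ∀ b ∈ t, a < b) :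
    toColex s < toColex t := by
  obtain ⟨b, hb⟩ := ht
  exact toColex_lt_toColex_iff_exists_forall_lt.2
    ⟨b, hb, fun hbs => (h b hbs b hb).false, fun a ha _ => h a ha b hb⟩

end Finset.Colex

section Embedding

variable {P : Set ℕ} {N M : Type*} [(LP P).Structure N] [(LP P).Structure M] (e : N ↪[LP P] M)
  {k : ℕ}

theorem erelP_comp_embedding (hk : 0 < k) (x y : Fin k → N) :
    ERelP P M k hk (e ∘ x) (e ∘ y) ↔ ERelP P N k hk x y := by
  rw [ERelP, ERelP, ← Fin.comp_append_s18, e.map_rel]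

theorem ltRelP_comp_embedding (hk : k ∈ P) (x y : Fin k → N) :
    LTRelP P M k hk (e ∘ x) (e ∘ y) ↔ LTRelP P N k hk x y := by
  rw [LTRelP, LTRelP, ← Fin.comp_append_s18, e.map_rel]

theorem SameType.comp_embedding {x y : Fin k → N} (h : SameType P N x y) :
    SameType P M (e ∘ x) (e ∘ y) :=
  ⟨fun i j => by simpa only [Function.comp_apply, e.injective.eq_iff] using h.1 i j,
    fun _ R v => (e.map_rel R (x ∘ v)).trans ((h.2 _ R v).trans (e.map_rel R (y ∘ v)).symm)⟩

end Embedding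

def IsZ4Sequence (P : Set ℕ) (M : Type*) [(LP P).Structure M] (n : ℕ) (hnP : n ∈ P)
    (hn0 : 0 < n) (a : Fin 6 → Fin n → M) : Prop :=
  (∀ i, Function.Injective (a i)) ∧
  (∀ i j, i ≠ j → Disjoint (Set.range (a i)) (Set.range (a j))) ∧
  (∀ i : Fin 5, LTRelP P M n hnP (a i.castSucc) (a i.succ)) ∧
  SameType P M (Fin.append (a 0) (a 1)) (Fin.append (a 1) (a 2)) ∧
  SameType P M (Fin.append (a 1) (a 2)) (Fin.append (a 2) (a 3)) ∧
  SameType P M (Fin.append (Fin.append (a 0) (a 1)) (Fin.append (a 2) (a 3)))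
    (Fin.append (Fin.append (a 2) (a 3)) (Fin.append (a 4) (a 5))) ∧
  ERelP P M (n + n) (Nat.add_pos_left hn0 n) (Fin.append (a 0) (a 1)) (Fin.append (a 4) (a 5)) ∧
  ¬ ERelP P M (n + n) (Nat.add_pos_left hn0 n) (Fin.append (a 0) (a 1)) (Fin.append (a 2) (a 3))

theorem IsZ4Sequence.comp_embedding {P : Set ℕ} {N M : Type*} [(LP P).Structure N]
    [(LP P).Structure M] (e : N ↪[LP P] M) {n : ℕ} {hnP : n ∈ P} {hn0 : 0 < n}
    {a : Fin 6 → Fin n → N} (h : IsZ4Sequence P N n hnP hn0 a) :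
    IsZ4Sequence P M n hnP hn0 (fun i => e ∘ a i) := by
  obtain ⟨hinj, hdisj, hlt, h₀₁, h₁₂, h₀₁₂₃, hE, hnE⟩ := h
  refine ⟨fun i => e.injective.comp (hinj i), fun i j hij => ?_,
    fun i => (ltRelP_comp_embedding e hnP _ _).2 (hlt i), ?_, ?_, ?_, ?_, ?_⟩
  · rw [Set.range_comp, Set.range_comp]
    exact (Set.disjoint_image_iff e.injective).2 (hdisj i j hij)
  all_goals simp only [← Fin.comp_append_s18]
  · exact h₀₁.comp_embedding e
  · exact h₁₂.comp_embedding e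
  · exact h₀₁₂₃.comp_embedding e
  · exact (erelP_comp_embedding e _ _ _).2 hE
  · exact mt (erelP_comp_embedding e _ _ _).1 hnE

section SetStructure

variable {α γ : Type*} [LinearOrder α] {k : ℕ}

def SameClass (cls : Finset α → γ) (x y : Fin k → α) : Prop :=
  Function.Injective x ∧ Function.Injective y ∧ cls (univ.image x) = cls (univ.image y)

def ColexLT (x y : Fin k → α) : Prop :=
  Function.Injective x ∧ Function.Injective y ∧ toColex (univ.image x) < toColex (univ.image y)

theorem sameClass_comp_iff {S : Set α} {f : α → α} {cls : Finset α → γ} (hf : Set.InjOn f S)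
    (hcls : ∀ s t : Finset α, ↑s ⊆ S → ↑t ⊆ S →
      (cls (s.image f) = cls (t.image f) ↔ cls s = cls t))
    {x y : Fin k → α} (hx : ∀ i, x i ∈ S) (hy : ∀ i, y i ∈ S) :
    SameClass cls (f ∘ x) (f ∘ y) ↔ SameClass cls x y := by
  rw [SameClass, SameClass, ← image_image, ← image_image,
    hcls _ _ (coe_image_univ_subset hx) (coe_image_univ_subset hy),
    hf.injective_iff _ (Set.range_subset_iff.2 hx), hf.injective_iff _ (Set.range_subset_iff.2 hy)]

theorem colexLT_comp_iff {S : Set α} {f : α → α} (hf : StrictMonoOn f S) {x y : Fin k → α}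
    (hx : ∀ i, x i ∈ S) (hy : ∀ i, y i ∈ S) :
    ColexLT (f ∘ x) (f ∘ y) ↔ ColexLT x y := by
  rw [ColexLT, ColexLT, ← image_image, ← image_image,
    Colex.toColex_image_lt_toColex_image_of_strictMonoOn hf (coe_image_univ_subset hx)
      (coe_image_univ_subset hy),
    hf.injOn.injective_iff _ (Set.range_subset_iff.2 hx),
    hf.injOn.injective_iff _ (Set.range_subset_iff.2 hy)]

variable (P : Set ℕ) (cls : Finset α → γ)

/-- `E_k` is `SameClass cls` and `<_k` is `ColexLT`, applied to the two halves of a `2k`-tuple. -/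
@[reducible] def setStructure : (LP P).Structure α where
  funMap g := Empty.elim g
  RelMap {_} R z := Sum.elim
    (fun k => SameClass cls (z ∘ Fin.cast k.2.2.symm ∘ Fin.castAdd k.1)
      (z ∘ Fin.cast k.2.2.symm ∘ Fin.natAdd k.1))
    (fun k => ColexLT (z ∘ Fin.cast k.2.2.symm ∘ Fin.castAdd k.1)
      (z ∘ Fin.cast k.2.2.symm ∘ Fin.natAdd k.1)) R

theorem erelP_setStructure (hk : 0 < k) (x y : Fin k → α) :
    @ERelP P α (setStructure P cls) k hk x y ↔ SameClass cls x y := by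
  show SameClass cls (Fin.append x y ∘ Fin.castAdd k) (Fin.append x y ∘ Fin.natAdd k) ↔ _
  rw [Fin.append_comp_castAdd, Fin.append_comp_natAdd]

theorem ltRelP_setStructure (hk : k ∈ P) (x y : Fin k → α) :
    @LTRelP P α (setStructure P cls) k hk x y ↔ ColexLT x y := by
  show ColexLT (Fin.append x y ∘ Fin.castAdd k) (Fin.append x y ∘ Fin.natAdd k) ↔ _
  rw [Fin.append_comp_castAdd, Fin.append_comp_natAdd]

variable {cls}

theorem sameType_setStructure_comp {S : Set α} {f : α → α} (hf : StrictMonoOn f S)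
    (hcls : ∀ s t : Finset α, ↑s ⊆ S → ↑t ⊆ S →
      (cls (s.image f) = cls (t.image f) ↔ cls s = cls t))
    {m : ℕ} {x : Fin m → α} (hx : ∀ i, x i ∈ S) :
    @SameType P α (setStructure P cls) m x (f ∘ x) := by
  refine ⟨fun i j => (hf.injOn.eq_iff (hx i) (hx j)).symm, ?_⟩
  rintro _ (⟨k, -, rfl⟩ | ⟨k, -, rfl⟩) v
  · exact (sameClass_comp_iff hf.injOn hcls (fun _ => hx _) (fun _ => hx _)).symm
  · exact (colexLT_comp_iff hf (fun _ => hx _) (fun _ => hx _)).symm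

theorem isKPStruct_setStructure (hcls : ∀ k ∈ P, Set.InjOn cls {s | #s = k}) :
    @IsKPStruct P α (setStructure P cls) := by
  refine ⟨fun k hk => ?_, fun k hkP hk => ?_⟩
  · simp only [erelP_setStructure]
    refine ⟨fun x y h => ⟨h.1, h.2.1⟩, ?_, fun x hx => ⟨hx, hx, rfl⟩,
      fun x y ⟨hx, hy, h⟩ => ⟨hy, hx, h.symm⟩,
      fun x y z ⟨hx, _, h⟩ ⟨_, hz, h'⟩ => ⟨hx, hz, h.trans h'⟩⟩
    rintro x y σ τ ⟨hx, hy, h⟩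
    exact ⟨hx.comp σ.injective, hy.comp τ.injective, by
      rwa [image_univ_comp_perm, image_univ_comp_perm]⟩
  · simp only [erelP_setStructure, ltRelP_setStructure]
    have hset : ∀ {x y : Fin k → α}, SameClass cls x y → univ.image x = univ.image y :=
      fun ⟨hx, hy, h⟩ => hcls k hkP (card_image_univ_of_injective hx)
        (card_image_univ_of_injective hy) h
    refine ⟨fun x y h => ⟨h.1, h.2.1⟩, ?_, ?_, ?_, ?_⟩
    · rintro x x' y y' hxx' hyy' ⟨-, -, h⟩
      exact ⟨hxx'.2.1, hyy'.2.1, by rwa [← hset hxx', ← hset hyy']⟩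
    · rintro x y ⟨-, -, h⟩ hxy
      exact (hset hxy ▸ h).false
    · rintro x y z ⟨hx, -, h⟩ ⟨-, hz, h'⟩
      exact ⟨hx, hz, h.trans h'⟩
    · intro x y hx hy hxy
      rcases lt_trichotomy (toColex (univ.image x)) (toColex (univ.image y)) with h | h | h
      · exact .inl ⟨hx, hy, h⟩
      · exact absurd ⟨hx, hy, congrArg cls (toColex_inj.1 h)⟩ hxy
      · exact .inr ⟨hy, hx, h⟩

end SetStructure

section Glue

variable {α : Type*} [DecidableEq α] {A B s : Finset α}

def glue (A B s : Finset α) : Finset α := if s = B then A else s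

theorem glue_self_right : glue A B B = A := if_pos rfl

theorem glue_of_ne (h : s ≠ B) : glue A B s = s := if_neg h

theorem glue_injOn_ne_left : Set.InjOn (glue A B) {s | s ≠ A} := by
  intro s hs t ht h
  by_cases hsB : s = B <;> by_cases htB : t = B
  · rw [hsB, htB]
  · rw [hsB, glue_self_right, glue_of_ne htB] at h; exact absurd h.symm ht
  · rw [htB, glue_self_right, glue_of_ne hsB] at h; exact absurd h hs
  · rwa [glue_of_ne hsB, glue_of_ne htB] at h

end Glue

def Blocks (n : ℕ) : Type := Fin 6 ×ₗ Fin n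

namespace Blocks

variable {n : ℕ}

instance : LinearOrder (Blocks n) := inferInstanceAs (LinearOrder (Fin 6 ×ₗ Fin n))

instance : Fintype (Blocks n) := inferInstanceAs (Fintype (Fin 6 ×ₗ Fin n))

def block (i : Fin 6) (j : Fin n) : Blocks n := toLex (i, j)

def index (p : Blocks n) : Fin 6 := (ofLex p).1

def shift (t : Fin 6) (p : Blocks n) : Blocks n := toLex ((ofLex p).1 + t, (ofLex p).2)

theorem index_block (i : Fin 6) (j : Fin n) : (block i j).index = i := rfl

theorem shift_comp_block (t i : Fin 6) : shift t ∘ block (n := n) i = block (i + t) := rfl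

theorem block_injective (i : Fin 6) : Function.Injective (block (n := n) i) :=
  fun _ _ h => (Prod.ext_iff.1 (toLex.injective h)).2

theorem block_lt_block {i i' : Fin 6} (h : i < i') (j j' : Fin n) : block i j < block i' j' :=
  Prod.Lex.toLex_lt_toLex.2 (.inl h)

theorem index_shift {t : Fin 6} {p : Blocks n} (h : p.index.val + t.val < 6) :
    (shift t p).index.val = p.index.val + t.val :=
  Fin.val_add_eq_of_add_lt h

theorem strictMonoOn_shift (t : Fin 6) :
    StrictMonoOn (shift (n := n) t) {p | p.index.val + t.val < 6} := by
  intro p hp q hq hpq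
  rcases Prod.Lex.lt_iff.1 hpq with h | ⟨h₁, h₂⟩
  · refine Prod.Lex.lt_iff.2 (.inl ?_)
    show (shift t p).index < (shift t q).index
    rw [Fin.lt_def, index_shift hp, index_shift hq]
    exact Nat.add_lt_add_right h _
  · exact Prod.Lex.lt_iff.2 (.inr ⟨congrArg (· + t) h₁, h₂⟩)

def pairSet (i i' : Fin 6) : Finset (Blocks n) := univ.image (Fin.append (block i) (block i'))

theorem mem_pairSet {i i' : Fin 6} {p : Blocks n} :
    p ∈ pairSet i i' ↔ p.index = i ∨ p.index = i' := by
  constructor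
  · rintro hp
    obtain ⟨j, -, rfl⟩ := mem_image.1 hp
    induction j using Fin.addCases <;>
      simp only [Fin.append_left, Fin.append_right, index_block, true_or, or_true]
  · rintro (rfl | rfl)
    · exact mem_image.2 ⟨Fin.castAdd n (ofLex p).2, mem_univ _, Fin.append_left _ _ _⟩
    · exact mem_image.2 ⟨Fin.natAdd n (ofLex p).2, mem_univ _, Fin.append_right _ _ _⟩

theorem pairSet_ne (hn : 0 < n) {i i' j j' : Fin 6} (hj : i ≠ j) (hj' : i ≠ j') :
    pairSet (n := n) i i' ≠ pairSet j j' := fun h => by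
  have hi : block i ⟨0, hn⟩ ∈ pairSet j j' := h ▸ mem_pairSet.2 (.inl rfl)
  exact (mem_pairSet.1 hi).elim hj hj'

theorem append_block_injective {i i' : Fin 6} (h : i ≠ i') :
    Function.Injective (Fin.append (block (n := n) i) (block i')) :=
  Fin.append_injective_iff.2
    ⟨block_injective i, block_injective i', fun _ _ hab => h (congrArg index hab)⟩

theorem card_pairSet {i i' : Fin 6} (h : i ≠ i') : #(pairSet (n := n) i i') = n + n :=
  card_image_univ_of_injective (append_block_injective h)

instance (P : Set ℕ) : (LP P).Structure (Blocks n) :=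
  setStructure P (glue (pairSet 0 1) (pairSet 4 5))

variable (P : Set ℕ)

theorem isKPStruct (h2n : n + n ∉ P) : IsKPStruct P (Blocks n) := by
  refine isKPStruct_setStructure P fun k hk s (hs : #s = k) t (ht : #t = k) hst => ?_
  have hne : ∀ {u : Finset (Blocks n)}, #u = k → u ≠ pairSet 4 5 := fun hu h =>
    h2n (by rwa [← card_pairSet (i := 4) (i' := 5) (by decide), ← h, hu])
  rwa [glue_of_ne (hne hs), glue_of_ne (hne ht)] at hst

theorem sameType_shift (hn : 0 < n) {t : Fin 6} (ht : t ≠ 0) {m : ℕ} {x : Fin m → Blocks n}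
    (hx : ∀ i, (x i).index.val + t.val < 6) :
    SameType P (Blocks n) x (shift t ∘ x) := by
  set S : Set (Blocks n) := {p | p.index.val + t.val < 6}
  have ht0 : 0 < t.val := Fin.pos_iff_ne_zero.2 ht
  have hB : ∀ {u : Finset (Blocks n)}, ↑u ⊆ S → u ≠ pairSet 4 5 := fun hu h => by
    have h5 : (5 : Fin 6).val + t.val < 6 := hu (h ▸ mem_pairSet.2 (.inr (index_block 5 ⟨0, hn⟩)))
    omega
  have hA : ∀ {u : Finset (Blocks n)}, ↑u ⊆ S → u.image (shift t) ≠ pairSet 0 1 := fun hu h => by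
    obtain ⟨p, hp, hp0⟩ := mem_image.1 (h ▸ mem_pairSet.2 (.inl (index_block 0 ⟨0, hn⟩)) :)
    have h0 := index_shift (hu hp)
    rw [hp0, index_block] at h0
    omega
  refine sameType_setStructure_comp P (strictMonoOn_shift t) (fun s s' hs hs' => ?_) hx
  rw [glue_of_ne (hB hs), glue_of_ne (hB hs'), glue_injOn_ne_left.eq_iff (hA hs) (hA hs'),
    ← coe_inj, coe_image, coe_image, (strictMonoOn_shift t).injOn.image_eq_image_iff hs hs',
    coe_inj]

theorem colexLT_block (hn : 0 < n) {i i' : Fin 6} (h : i < i') :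
    ColexLT (block (n := n) i) (block i') :=
  ⟨block_injective i, block_injective i', Colex.toColex_lt_toColex_of_forall_lt
    ⟨_, mem_image_of_mem _ (mem_univ ⟨0, hn⟩)⟩
    (by simpa only [forall_mem_image, mem_univ, true_implies] using
      fun _ _ => block_lt_block h _ _)⟩

theorem erelP_append_block_iff (hk : 0 < n + n) {i i' j j' : Fin 6} (hi : i ≠ i') (hj : j ≠ j') :
    ERelP P (Blocks n) (n + n) hk (Fin.append (block i) (block i'))
        (Fin.append (block j) (block j')) ↔
      glue (pairSet (n := n) 0 1) (pairSet 4 5) (pairSet i i') =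
        glue (pairSet 0 1) (pairSet 4 5) (pairSet j j') :=
  (erelP_setStructure P _ _ _ _).trans
    ((and_iff_right (append_block_injective hi)).trans (and_iff_right (append_block_injective hj)))

theorem isZ4Sequence_block (hnP : n ∈ P) (hn0 : 0 < n) :
    IsZ4Sequence P (Blocks n) n hnP hn0 block := by
  refine ⟨block_injective, fun i j hij => ?_,
    fun i => (ltRelP_setStructure P _ hnP _ _).2 (colexLT_block hn0 i.castSucc_lt_succ),
    ?_, ?_, ?_, ?_, ?_⟩
  · exact Set.disjoint_left.2 fun _ ⟨_, ha⟩ ⟨_, hb⟩ => hij (congrArg index (ha.trans hb.symm))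
  · rw [show Fin.append (block 1) (block 2) = shift 1 ∘ Fin.append (block (n := n) 0) (block 1) by
      rw [Fin.comp_append_s18, shift_comp_block, shift_comp_block]; rfl]
    exact sameType_shift P hn0 one_ne_zero (by
      simp only [Fin.forall_fin_add, Fin.append_left, Fin.append_right, index_block]; simp)
  · rw [show Fin.append (block 2) (block 3) = shift 1 ∘ Fin.append (block (n := n) 1) (block 2) by
      rw [Fin.comp_append_s18, shift_comp_block, shift_comp_block]; rfl]
    exact sameType_shift P hn0 one_ne_zero (by
      simp only [Fin.forall_fin_add, Fin.append_left, Fin.append_right, index_block]; simp)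
  · rw [show Fin.append (Fin.append (block 2) (block 3)) (Fin.append (block 4) (block 5)) =
        shift 2 ∘ Fin.append (Fin.append (block (n := n) 0) (block 1))
          (Fin.append (block 2) (block 3)) by
      simp only [Fin.comp_append_s18, shift_comp_block]; rfl]
    exact sameType_shift P hn0 (by decide) (by
      simp only [Fin.forall_fin_add, Fin.append_left, Fin.append_right, index_block]; simp)
  · rw [erelP_append_block_iff P _ (by decide) (by decide), glue_self_right,
      glue_of_ne (pairSet_ne hn0 (by decide) (by decide))]
  · rw [erelP_append_block_iff P _ (by decide) (by decide),
      glue_of_ne (pairSet_ne hn0 (by decide) (by decide)),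
      glue_of_ne (pairSet_ne hn0 (by decide) (by decide))]
    exact (pairSet_ne hn0 (by decide) (by decide)).symm

end Blocks

theorem KP_limit_Z4_sequence_general (P : Set ℕ)
    (M : Type) [(LP P).Structure M]
    (hage : (LP P).age M = KP P)
    (n : ℕ) (hnP : n ∈ P) (h2n : n + n ∉ P) (hn0 : 0 < n) :
    ∃ a : Fin 6 → (Fin n → M),
      -- pairwise disjoint injective n-tuples
      (∀ i, Function.Injective (a i)) ∧
      (∀ i j, i ≠ j → Disjoint (Set.range (a i)) (Set.range (a j))) ∧
      -- ā₁ <_n ā₂ <_n ā₃ <_n ā₄ <_n ā₅ <_n ā₆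
      (∀ i : Fin 5, LTRelP P M n hnP (a i.castSucc) (a i.succ)) ∧
      -- ā₁ā₂, ā₂ā₃ and ā₃ā₄ have the same isomorphism type in M
      SameType P M (Fin.append (a 0) (a 1)) (Fin.append (a 1) (a 2)) ∧
      SameType P M (Fin.append (a 1) (a 2)) (Fin.append (a 2) (a 3)) ∧
      -- ā₁ā₂ā₃ā₄ and ā₃ā₄ā₅ā₆ have the same isomorphism type in M
      SameType P M (Fin.append (Fin.append (a 0) (a 1)) (Fin.append (a 2) (a 3)))
        (Fin.append (Fin.append (a 2) (a 3)) (Fin.append (a 4) (a 5))) ∧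
      -- ā₁ā₂ and ā₅ā₆ are E_{2n}-equivalent, but not E_{2n}-equivalent to ā₃ā₄
      ERelP P M (n + n) (Nat.add_pos_left hn0 n)
        (Fin.append (a 0) (a 1)) (Fin.append (a 4) (a 5)) ∧
      ¬ ERelP P M (n + n) (Nat.add_pos_left hn0 n)
        (Fin.append (a 0) (a 1)) (Fin.append (a 2) (a 3)) := by
  have hmem : Bundled.of (c := (LP P).Structure) (Blocks n) ∈ (LP P).age M :=
    hage ▸ ⟨Finite.of_fintype (Blocks n), Blocks.isKPStruct P h2n⟩
  obtain ⟨-, ⟨e⟩⟩ := hmem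
  exact ⟨_, (Blocks.isZ4Sequence_block P hnP hn0).comp_embedding e⟩

/-- for `n ∈ P` with `2n ∉ P`, the Fraïssé limit `M` of `K_P` contains a
`<_n`-increasing sequence `ā₁, …, ā₆` of type `ℤ/4ℤ`. -/
theorem KP_limit_Z4_sequence (P : Set ℕ) (hP : ∀ n ∈ P, 3 ≤ n)
    (M : Type) [(LP P).Structure M] [Countable M]
    (hUH : (LP P).IsUltrahomogeneous M) (hage : (LP P).age M = KP P)
    (n : ℕ) (hnP : n ∈ P) (h2n : n + n ∉ P) (hn0 : 0 < n) :
    ∃ a : Fin 6 → (Fin n → M),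
      -- pairwise disjoint injective n-tuples
      (∀ i, Function.Injective (a i)) ∧
      (∀ i j, i ≠ j → Disjoint (Set.range (a i)) (Set.range (a j))) ∧
      -- ā₁ <_n ā₂ <_n ā₃ <_n ā₄ <_n ā₅ <_n ā₆
      (∀ i : Fin 5, LTRelP P M n hnP (a i.castSucc) (a i.succ)) ∧
      -- ā₁ā₂, ā₂ā₃ and ā₃ā₄ have the same isomorphism type in M
      SameType P M (Fin.append (a 0) (a 1)) (Fin.append (a 1) (a 2)) ∧
      SameType P M (Fin.append (a 1) (a 2)) (Fin.append (a 2) (a 3)) ∧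
      -- ā₁ā₂ā₃ā₄ and ā₃ā₄ā₅ā₆ have the same isomorphism type in M
      SameType P M (Fin.append (Fin.append (a 0) (a 1)) (Fin.append (a 2) (a 3)))
        (Fin.append (Fin.append (a 2) (a 3)) (Fin.append (a 4) (a 5))) ∧
      -- ā₁ā₂ and ā₅ā₆ are E_{2n}-equivalent, but not E_{2n}-equivalent to ā₃ā₄
      ERelP P M (n + n) (Nat.add_pos_left hn0 n)
        (Fin.append (a 0) (a 1)) (Fin.append (a 4) (a 5)) ∧
      ¬ ERelP P M (n + n) (Nat.add_pos_left hn0 n)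
        (Fin.append (a 0) (a 1)) (Fin.append (a 2) (a 3)) :=
  KP_limit_Z4_sequence_general P M hage n hnP h2n hn0
end
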